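/- For every behaviour (E₁,E₂,ω₁,ω₂) in the quantum set Q there exist unit vectors n₁, n₂, k in ℝ³ and a vector m in ℝ³ with ‖m‖ ≤ 1 such that Eₓ = nₓ·m and (1 + nₓ·k)/2 ≤ ωₓ for x = 1,2; i.e., every point of Q is realized without shared randomness by a two-dimensional representation ρₓ = (1 + nₓ·σ)/2, M = m·σ, O = (1 + k·σ)/2, with σ the vector of Pauli matrices. -/

import Mathlib

open scoped ComplexOrder

noncomputable section

/-- A behaviour `(E, ω)` admits a (finite-dimensional) quantum representation. -/
def IsQuantumRep (E ω : Fin 2 → ℝ) : Prop :=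
  ∃ (d : ℕ) (ρ : Fin 2 → Matrix (Fin d) (Fin d) ℂ)
    (M O : Matrix (Fin d) (Fin d) ℂ) (v : Fin d → ℂ),
    (∀ x, (ρ x).PosSemidef) ∧ (∀ x, (ρ x).trace = 1) ∧
    M.IsHermitian ∧ (1 - M).PosSemidef ∧ (1 + M).PosSemidef ∧
    O.IsHermitian ∧ O.mulVec v = 0 ∧ (∑ i, Complex.normSq (v i)) = 1 ∧
    (O - (1 - Matrix.vecMulVec v (star v))).PosSemidef ∧
    (∀ x, (ρ x * M).trace = (E x : ℂ)) ∧
    (∀ x, ((ρ x * O).trace).re ≤ ω x)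

/-- The quantum set `Q`: all finite convex combinations of behaviours with a
quantum representation. -/
def QuantumSet : Set ((Fin 2 → ℝ) × (Fin 2 → ℝ)) :=
  convexHull ℝ {b | IsQuantumRep b.1 b.2}

/-!
Let `p = ⟨0|ρ|0⟩` be the weight of the ground state. The gap condition on `O` gives
`Tr ρO ≥ 1 - p`. Splitting `2p = ⟨0|ρ(1 + M)|0⟩ + ⟨0|ρ(1 - M)|0⟩` and bounding each term by
Cauchy–Schwarz bounds `√p` by the Bhattacharyya coefficient of the outcome statistics of `M` on
`ρ` and on `|0⟩`; with `E = Tr ρM` and `g = ⟨0|M|0⟩` this reads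
`2p - 1 ≤ E g + √(1 - E²) √(1 - g²)`, and a qubit with `n`, `m`, `k` in one plane attains it.
The right-hand side is jointly concave, so these constraints cut out a convex set, which
therefore contains the whole convex hull `Q`.
-/

open scoped MatrixOrder
open Matrix RCLike Set

/-- For `E = cos α` and `g = cos β` this is `cos (α - β)`. -/
def overlapBound (E g : ℝ) : ℝ := E * g + √(1 - E ^ 2) * √(1 - g ^ 2)

theorem overlapBound_concaveOn :
    ConcaveOn ℝ (Icc (-1) 1 ×ˢ Icc (-1) 1) fun q : ℝ × ℝ => overlapBound q.1 q.2 := by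
  refine ⟨(convex_Icc _ _).prod (convex_Icc _ _), ?_⟩
  rintro ⟨E₁, g₁⟩ ⟨⟨hE₁, hE₁'⟩, ⟨hg₁, hg₁'⟩⟩ ⟨E₂, g₂⟩ ⟨⟨hE₂, hE₂'⟩, ⟨hg₂, hg₂'⟩⟩ t s ht hs hts
  obtain rfl : s = 1 - t := by linarith
  simp only [overlapBound, smul_eq_mul, Prod.smul_mk, Prod.mk_add_mk]
  -- `1 - (t E₁ + s E₂)² = t (1 - E₁²) + s (1 - E₂²) + t s (E₁ - E₂)²`, and the same for `g`,
  -- so concavity is Cauchy–Schwarz for three terms.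
  have cs := Real.sum_mul_le_sqrt_mul_sqrt Finset.univ
    ![√t * √(1 - E₁ ^ 2), √(1 - t) * √(1 - E₂ ^ 2), √t * √(1 - t) * (E₁ - E₂)]
    ![√t * √(1 - g₁ ^ 2), √(1 - t) * √(1 - g₂ ^ 2), √t * √(1 - t) * (g₁ - g₂)]
  simp only [Fin.sum_univ_three, Matrix.cons_val_zero, Matrix.cons_val_one, Matrix.cons_val_two,
    Matrix.head_cons, Matrix.tail_cons, mul_pow, Real.sq_sqrt ht, Real.sq_sqrt hs] at cs
  rw [Real.sq_sqrt (by nlinarith), Real.sq_sqrt (by nlinarith), Real.sq_sqrt (by nlinarith),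
    Real.sq_sqrt (by nlinarith)] at cs
  have hA : t * (1 - E₁ ^ 2) + (1 - t) * (1 - E₂ ^ 2) + t * (1 - t) * (E₁ - E₂) ^ 2
      = 1 - (t * E₁ + (1 - t) * E₂) ^ 2 := by ring
  have hB : t * (1 - g₁ ^ 2) + (1 - t) * (1 - g₂ ^ 2) + t * (1 - t) * (g₁ - g₂) ^ 2
      = 1 - (t * g₁ + (1 - t) * g₂) ^ 2 := by ring
  rw [hA, hB] at cs
  linear_combination cs
    - ((E₁ - E₂) * (g₁ - g₂) * (√(1 - t) * √(1 - t)) + √(1 - E₁ ^ 2) * √(1 - g₁ ^ 2))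
      * Real.mul_self_sqrt ht
    - ((E₁ - E₂) * (g₁ - g₂) * t + √(1 - E₂ ^ 2) * √(1 - g₂ ^ 2)) * Real.mul_self_sqrt hs

theorem sq_sqrt_add_sqrt_eq_overlapBound {E g : ℝ} (hE : E ∈ Icc (-1) 1) (hg : g ∈ Icc (-1) 1) :
    (√((1 + E) * (1 + g)) + √((1 - E) * (1 - g))) ^ 2 = 2 * (1 + overlapBound E g) := by
  obtain ⟨hE₁, hE₂⟩ := hE
  obtain ⟨hg₁, hg₂⟩ := hg
  have hcross : √((1 + E) * (1 + g)) * √((1 - E) * (1 - g)) = √(1 - E ^ 2) * √(1 - g ^ 2) := by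
    rw [← Real.sqrt_mul (by nlinarith), ← Real.sqrt_mul (by nlinarith)]
    ring_nf
  rw [add_sq, Real.sq_sqrt (by nlinarith), Real.sq_sqrt (by nlinarith), mul_assoc 2, hcross,
    overlapBound]
  ring

theorem two_mul_sub_one_le_overlapBound {E g p a b : ℝ} (hE : E ∈ Icc (-1) 1)
    (hg : g ∈ Icc (-1) 1) (hp : 0 ≤ p) (hab : a + b = 2 * p)
    (ha : a ^ 2 ≤ (1 + E) * p * (1 + g)) (hb : b ^ 2 ≤ (1 - E) * p * (1 - g)) :
    2 * p - 1 ≤ overlapBound E g := by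
  set K := √((1 + E) * (1 + g)) + √((1 - E) * (1 - g))
  have h2p : 2 * p ≤ K * √p := by
    have ha' := Real.le_sqrt_of_sq_le (ha.trans_eq (by ring : _ = (1 + E) * (1 + g) * p))
    have hb' := Real.le_sqrt_of_sq_le (hb.trans_eq (by ring : _ = (1 - E) * (1 - g) * p))
    rw [Real.sqrt_mul (by nlinarith [hE.1, hg.1])] at ha'
    rw [Real.sqrt_mul (by nlinarith [hE.2, hg.2])] at hb'
    linarith
  rcases hp.eq_or_lt with rfl | hp
  · have : -1 ≤ E * g := by nlinarith [hE.1, hE.2, hg.1, hg.2]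
    have : 0 ≤ √(1 - E ^ 2) * √(1 - g ^ 2) := by positivity
    rw [overlapBound]
    linarith
  · have hsp := Real.sqrt_pos.mpr hp
    have h2sp : 2 * √p ≤ K := by
      refine le_of_mul_le_mul_right ?_ hsp
      rwa [mul_assoc, Real.mul_self_sqrt hp.le]
    have := sq_sqrt_add_sqrt_eq_overlapBound hE hg
    nlinarith [Real.sq_sqrt hp.le]

section

variable {𝕜 m n : Type*} [RCLike 𝕜] [Fintype m] [Fintype n]

theorem re_sq_le_norm_sq (z : 𝕜) : re z ^ 2 ≤ ‖z‖ ^ 2 := by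
  rw [sq, ← normSq_eq_def']
  exact re_sq_le_normSq z

theorem norm_star_dotProduct_sq_le (a b : n → 𝕜) :
    ‖star a ⬝ᵥ b‖ ^ 2 ≤ re (star a ⬝ᵥ a) * re (star b ⬝ᵥ b) := by
  have := inner_mul_inner_self_le (𝕜 := 𝕜) (WithLp.toLp 2 a) (WithLp.toLp 2 b)
  rw [norm_inner_symm (WithLp.toLp 2 b), ← sq] at this
  simpa only [EuclideanSpace.inner_toLp_toLp, dotProduct_comm _ (star _)] using this

theorem re_star_dotProduct_self (a : n → 𝕜) : re (star a ⬝ᵥ a) = ∑ i, ‖a i‖ ^ 2 := by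
  simp [dotProduct, RCLike.conj_mul]

theorem re_trace_conjTranspose_mul_self (C : Matrix m n 𝕜) :
    re (Cᴴ * C).trace = ∑ i, ∑ j, ‖C i j‖ ^ 2 := by
  rw [← star_vec_dotProduct_vec, re_star_dotProduct_self, Fintype.sum_prod_type, Finset.sum_comm]
  rfl

theorem re_star_mulVec_dotProduct_mulVec_le (C : Matrix m n 𝕜) (x : n → 𝕜) :
    re (star (C *ᵥ x) ⬝ᵥ C *ᵥ x) ≤ re (Cᴴ * C).trace * re (star x ⬝ᵥ x) := by
  have row (i : m) : ‖(C *ᵥ x) i‖ ^ 2 ≤ (∑ j, ‖C i j‖ ^ 2) * re (star x ⬝ᵥ x) := by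
    have := norm_star_dotProduct_sq_le (star (C i)) x
    rwa [star_star, dotProduct_comm (C i) (star (C i)), re_star_dotProduct_self (C i)] at this
  rw [re_trace_conjTranspose_mul_self, re_star_dotProduct_self, Finset.sum_mul]
  exact Finset.sum_le_sum fun i _ => row i

theorem star_mulVec_dotProduct_mulVec (C : Matrix m n 𝕜) (x y : n → 𝕜) :
    star (C *ᵥ x) ⬝ᵥ C *ᵥ y = star x ⬝ᵥ (Cᴴ * C) *ᵥ y := by
  rw [star_mulVec, ← dotProduct_mulVec, mulVec_mulVec]

theorem Matrix.PosSemidef.trace_mul_nonneg {A B : Matrix n n 𝕜} (hA : A.PosSemidef)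
    (hB : B.PosSemidef) : 0 ≤ (A * B).trace := by
  classical
  obtain ⟨S, rfl⟩ := CStarAlgebra.nonneg_iff_eq_star_mul_self.mp hA.nonneg
  rw [mul_assoc, trace_mul_comm, star_eq_conjTranspose]
  exact (hB.mul_mul_conjTranspose_same S).trace_nonneg

theorem Matrix.PosSemidef.norm_dotProduct_mul_mulVec_sq_le {A B : Matrix n n 𝕜}
    (hA : A.PosSemidef) (hB : B.PosSemidef) (v : n → 𝕜) :
    ‖star v ⬝ᵥ (A * B) *ᵥ v‖ ^ 2 ≤
      re (A * B).trace * re (star v ⬝ᵥ A *ᵥ v) * re (star v ⬝ᵥ B *ᵥ v) := by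
  classical
  obtain ⟨S, rfl⟩ := CStarAlgebra.nonneg_iff_eq_star_mul_self.mp hA.nonneg
  obtain ⟨T, rfl⟩ := CStarAlgebra.nonneg_iff_eq_mul_star_self.mp hB.nonneg
  simp only [star_eq_conjTranspose]
  -- `⟨v, SᴴS TTᴴ v⟩ = ⟨Sv, (ST)(Tᴴv)⟩`, and the operator norm of `ST` is at most its
  -- Hilbert–Schmidt norm `√(Tr (SᴴS TTᴴ))`.
  have hsplit : star v ⬝ᵥ (Sᴴ * S * (T * Tᴴ)) *ᵥ v
      = star (S *ᵥ v) ⬝ᵥ (S * T) *ᵥ (Tᴴ *ᵥ v) := by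
    rw [mulVec_mulVec, Matrix.mul_assoc S, ← mulVec_mulVec (M := S),
      star_mulVec_dotProduct_mulVec, mulVec_mulVec]
  have hB' : star v ⬝ᵥ (T * Tᴴ) *ᵥ v = star (Tᴴ *ᵥ v) ⬝ᵥ Tᴴ *ᵥ v := by
    rw [star_mulVec_dotProduct_mulVec, conjTranspose_conjTranspose]
  have htr : (Sᴴ * S * (T * Tᴴ)).trace = ((S * T)ᴴ * (S * T)).trace := by
    rw [← Matrix.mul_assoc, trace_mul_comm, conjTranspose_mul]
    simp only [Matrix.mul_assoc]
  rw [hsplit, hB', htr, ← star_mulVec_dotProduct_mulVec]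
  calc _ ≤ re (star (S *ᵥ v) ⬝ᵥ S *ᵥ v) *
          re (star ((S * T) *ᵥ Tᴴ *ᵥ v) ⬝ᵥ (S * T) *ᵥ Tᴴ *ᵥ v) :=
        norm_star_dotProduct_sq_le _ _
    _ ≤ re (star (S *ᵥ v) ⬝ᵥ S *ᵥ v) *
          (re ((S * T)ᴴ * (S * T)).trace * re (star (Tᴴ *ᵥ v) ⬝ᵥ Tᴴ *ᵥ v)) :=
        mul_le_mul_of_nonneg_left (re_star_mulVec_dotProduct_mulVec_le _ _)
          (by rw [re_star_dotProduct_self]; positivity)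
    _ = _ := by ring

variable [DecidableEq n]

theorem re_trace_mul_mem_Icc {ρ M : Matrix n n 𝕜} (hρ : ρ.PosSemidef) (hρtr : ρ.trace = 1)
    (hMm : (1 - M).PosSemidef) (hMp : (1 + M).PosSemidef) :
    re (ρ * M).trace ∈ Icc (-1) 1 := by
  have hm := (RCLike.nonneg_iff.mp (hρ.trace_mul_nonneg hMm)).1
  have hp := (RCLike.nonneg_iff.mp (hρ.trace_mul_nonneg hMp)).1
  simp only [Matrix.mul_sub, Matrix.mul_add, Matrix.mul_one, trace_sub, trace_add, hρtr, map_sub,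
    map_add, one_re] at hm hp
  constructor <;> linarith

theorem re_dotProduct_mulVec_mem_Icc {M : Matrix n n 𝕜} {v : n → 𝕜} (hv : star v ⬝ᵥ v = 1)
    (hMm : (1 - M).PosSemidef) (hMp : (1 + M).PosSemidef) :
    re (star v ⬝ᵥ M *ᵥ v) ∈ Icc (-1) 1 := by
  have hm := hMm.re_dotProduct_nonneg v
  have hp := hMp.re_dotProduct_nonneg v
  simp only [sub_mulVec, add_mulVec, one_mulVec, dotProduct_sub, dotProduct_add, hv, map_sub,
    map_add, one_re] at hm hp
  constructor <;> linarith

theorem one_sub_re_dotProduct_le_re_trace_mul {ρ O : Matrix n n 𝕜} {v : n → 𝕜}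
    (hρ : ρ.PosSemidef) (hρtr : ρ.trace = 1)
    (hO : (O - (1 - vecMulVec v (star v))).PosSemidef) :
    1 - re (star v ⬝ᵥ ρ *ᵥ v) ≤ re (ρ * O).trace := by
  have h := (RCLike.nonneg_iff.mp (hρ.trace_mul_nonneg hO)).1
  have hvv : (ρ * vecMulVec v (star v)).trace = star v ⬝ᵥ ρ *ᵥ v := by
    rw [mul_vecMulVec, trace_vecMulVec, dotProduct_comm]
  simp only [Matrix.mul_sub, Matrix.mul_one, trace_sub, hρtr, hvv, map_sub, one_re] at h
  linarith

theorem two_mul_re_dotProduct_sub_one_le_overlapBound {ρ M : Matrix n n 𝕜} {v : n → 𝕜}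
    (hρ : ρ.PosSemidef) (hρtr : ρ.trace = 1) (hMm : (1 - M).PosSemidef)
    (hMp : (1 + M).PosSemidef) (hv : star v ⬝ᵥ v = 1) :
    2 * re (star v ⬝ᵥ ρ *ᵥ v) - 1 ≤
      overlapBound (re (ρ * M).trace) (re (star v ⬝ᵥ M *ᵥ v)) := by
  refine two_mul_sub_one_le_overlapBound (re_trace_mul_mem_Icc hρ hρtr hMm hMp)
    (re_dotProduct_mulVec_mem_Icc hv hMm hMp) (hρ.re_dotProduct_nonneg v)
    (a := re (star v ⬝ᵥ (ρ * (1 + M)) *ᵥ v)) (b := re (star v ⬝ᵥ (ρ * (1 - M)) *ᵥ v)) ?_ ?_ ?_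
  · simp only [Matrix.mul_add, Matrix.mul_sub, Matrix.mul_one, add_mulVec, sub_mulVec,
      dotProduct_add, dotProduct_sub, map_add, map_sub]
    ring
  · refine (re_sq_le_norm_sq _).trans ((hρ.norm_dotProduct_mul_mulVec_sq_le hMp v).trans_eq ?_)
    simp [Matrix.mul_add, add_mulVec, dotProduct_add, hρtr, hv]
  · refine (re_sq_le_norm_sq _).trans ((hρ.norm_dotProduct_mul_mulVec_sq_le hMm v).trans_eq ?_)
    simp [Matrix.mul_sub, sub_mulVec, dotProduct_sub, hρtr, hv]

end

/-- `g` stands for `⟨0|M|0⟩`, the mean of `M` in the ground state of `O`. -/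
def blochSet : Set ((Fin 2 → ℝ) × (Fin 2 → ℝ)) :=
  {b | ∃ g ∈ Icc (-1 : ℝ) 1, ∀ x, b.1 x ∈ Icc (-1 : ℝ) 1 ∧ 1 - 2 * b.2 x ≤ overlapBound (b.1 x) g}

theorem convex_blochSet : Convex ℝ blochSet := by
  rintro ⟨E, ω⟩ ⟨g, hg, hEω⟩ ⟨E', ω'⟩ ⟨g', hg', hEω'⟩ t s ht hs hts
  refine ⟨t * g + s * g', convex_Icc _ _ hg hg' ht hs hts, fun x => ?_⟩
  have hconc := overlapBound_concaveOn.2 (mk_mem_prod (hEω x).1 hg) (mk_mem_prod (hEω' x).1 hg')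
    ht hs hts
  simp only [smul_eq_mul, Prod.smul_mk, Prod.mk_add_mk] at hconc
  refine ⟨convex_Icc _ _ (hEω x).1 (hEω' x).1 ht hs hts, ?_⟩
  simp only [Prod.smul_mk, Prod.mk_add_mk, Pi.add_apply, Pi.smul_apply, smul_eq_mul]
  have hlin : 1 - 2 * (t * ω x + s * ω' x) = t * (1 - 2 * ω x) + s * (1 - 2 * ω' x) := by
    linear_combination -hts
  nlinarith [(hEω x).2, (hEω' x).2]

theorem IsQuantumRep.mem_blochSet {E ω : Fin 2 → ℝ} (h : IsQuantumRep E ω) :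
    (E, ω) ∈ blochSet := by
  obtain ⟨d, ρ, M, O, v, hρ, hρtr, -, hMm, hMp, -, -, hv, hO, hE, hω⟩ := h
  have hvv : star v ⬝ᵥ v = 1 := by
    have := congrArg ((↑) : ℝ → ℂ) hv
    push_cast at this
    simpa [dotProduct, Complex.normSq_eq_conj_mul_self] using this
  refine ⟨re (star v ⬝ᵥ M *ᵥ v), re_dotProduct_mulVec_mem_Icc hvv hMm hMp, fun x => ?_⟩
  have hEx : re (ρ x * M).trace = E x := by simp [hE x]
  have hgap := one_sub_re_dotProduct_le_re_trace_mul (hρ x) (hρtr x) hO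
  have hoverlap := two_mul_re_dotProduct_sub_one_le_overlapBound (hρ x) (hρtr x) hMm hMp hvv
  rw [hEx] at hoverlap
  show E x ∈ Icc (-1) 1 ∧ 1 - 2 * ω x ≤ overlapBound (E x) (re (star v ⬝ᵥ M *ᵥ v))
  simp only [re_to_complex] at hgap hoverlap ⊢
  exact ⟨hEx ▸ re_trace_mul_mem_Icc (hρ x) (hρtr x) hMm hMp, by linarith [hω x]⟩

def planarUnitVec (c : ℝ) : Fin 3 → ℝ := ![c, √(1 - c ^ 2), 0]

theorem sum_planarUnitVec_mul (a b : ℝ) :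
    ∑ i, planarUnitVec a i * planarUnitVec b i = overlapBound a b := by
  simp [planarUnitVec, overlapBound, Fin.sum_univ_three]

theorem sum_planarUnitVec_mul_self {c : ℝ} (hc : c ∈ Icc (-1) 1) :
    ∑ i, planarUnitVec c i * planarUnitVec c i = 1 := by
  rw [sum_planarUnitVec_mul, overlapBound, Real.mul_self_sqrt (by nlinarith [hc.1, hc.2])]
  ring

theorem exists_bloch_of_mem_blochSet {E ω : Fin 2 → ℝ} (h : (E, ω) ∈ blochSet) :
    ∃ (n : Fin 2 → Fin 3 → ℝ) (m k : Fin 3 → ℝ),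
      (∀ x, ∑ i, n x i * n x i = 1) ∧ (∑ i, m i * m i ≤ 1) ∧
      (∑ i, k i * k i = 1) ∧
      (∀ x, E x = ∑ i, n x i * m i) ∧
      (∀ x, (1 + ∑ i, n x i * k i) / 2 ≤ ω x) := by
  obtain ⟨g, hg, hEω⟩ := h
  refine ⟨fun x => planarUnitVec (E x), ![1, 0, 0], -planarUnitVec g,
    fun x => sum_planarUnitVec_mul_self (hEω x).1, by simp [Fin.sum_univ_three], ?_,
    fun x => by simp [planarUnitVec, Fin.sum_univ_three], fun x => ?_⟩
  · simpa using sum_planarUnitVec_mul_self hg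
  · simp only [Pi.neg_apply, mul_neg, Finset.sum_neg_distrib, sum_planarUnitVec_mul]
    linarith [(hEω x).2]

theorem mem_quantumSet_bloch_rep (E ω : Fin 2 → ℝ)
    (h : (E, ω) ∈ QuantumSet) :
    ∃ (n : Fin 2 → Fin 3 → ℝ) (m k : Fin 3 → ℝ),
      (∀ x, ∑ i, n x i * n x i = 1) ∧ (∑ i, m i * m i ≤ 1) ∧
      (∑ i, k i * k i = 1) ∧
      (∀ x, E x = ∑ i, n x i * m i) ∧
      (∀ x, (1 + ∑ i, n x i * k i) / 2 ≤ ω x) :=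
  exists_bloch_of_mem_blochSet <|
    convexHull_min (fun _ hb => IsQuantumRep.mem_blochSet hb) convex_blochSet h

end
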